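/- arXiv:1104.5409 — 7 statements merged into one kernel-verified Lean document; each statement's English description precedes it below -/
import Mathlib

section
/- Let q ≥ 1, let α_j ∈ (0,1] for j = 1,...,q, let C_j be max-stable copulas on [0,1]^d, and let β_{ji} ≥ 0 satisfy ∑_{j=1}^q β_{ji} = 1 for each i = 1,...,d. Then the function C_Y(u₁,...,u_d) = exp(-∑_{j=1}^q (-ln C_j(exp(-(-β_{j1} ln u₁)^{1/α_j}), ..., exp(-(-β_{jd} ln u_d)^{1/α_j})))^{α_j}) satisfies C_Y(u₁^t,...,u_d^t) = C_Y(u₁,...,u_d)^t for all t > 0 and u ∈ (0,1]^d, and its i-th margin is uniform: C_Y(1,...,1,u_i,1,...,1) = u_i. -/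
open Real

/-- `(s*x)^y = s^y * x^y` for `s > 0` and arbitrary real `x`. -/
lemma mul_rpow_left_pos {s : ℝ} (hs : 0 < s) (x y : ℝ) :
    (s * x) ^ y = s ^ y * x ^ y := by
  rcases lt_trichotomy x 0 with hx | hx | hx
  · rw [Real.rpow_def_of_neg (mul_neg_of_pos_of_neg hs hx), Real.rpow_def_of_neg hx,
      Real.rpow_def_of_pos hs, Real.log_mul hs.ne' hx.ne, add_mul, Real.exp_add]
    ring
  · subst hx
    rcases eq_or_ne y 0 with hy | hy
    · simp [hy]
    · simp [Real.zero_rpow hy]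
  · rw [Real.mul_rpow hs.le hx.le]

/-- the copula `C_Y` of the componentwise maxima model is
max-stable and has uniform margins. -/
theorem stmt1 (d q : ℕ) (hq : 0 < q) (α : Fin q → ℝ)
    (hα : ∀ j, α j ∈ Set.Ioc (0:ℝ) 1)
    (C : Fin q → (Fin d → ℝ) → ℝ)
    (hpos : ∀ j, ∀ u : Fin d → ℝ, (∀ i, u i ∈ Set.Ioc (0:ℝ) 1) → 0 < C j u)
    (hms : ∀ j, ∀ t : ℝ, 0 < t → ∀ u : Fin d → ℝ,
      (∀ i, u i ∈ Set.Ioc (0:ℝ) 1) →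
      C j (fun i => u i ^ t) = (C j u) ^ t)
    (hmarg : ∀ j, ∀ i : Fin d, ∀ u : ℝ, u ∈ Set.Ioc (0:ℝ) 1 →
      C j (Function.update (fun _ => (1:ℝ)) i u) = u)
    (β : Fin q → Fin d → ℝ) (hβ : ∀ j i, 0 ≤ β j i)
    (hβsum : ∀ i, ∑ j, β j i = 1)
    (CY : (Fin d → ℝ) → ℝ)
    (hCY : ∀ u : Fin d → ℝ, CY u =
      Real.exp (-(∑ j, (-Real.log (C j (fun i =>
        Real.exp (-((-(β j i * Real.log (u i))) ^ (1/(α j))))))) ^ (α j)))) :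
    (∀ t : ℝ, 0 < t → ∀ u : Fin d → ℝ, (∀ i, u i ∈ Set.Ioc (0:ℝ) 1) →
      CY (fun i => u i ^ t) = (CY u) ^ t) ∧
    (∀ i : Fin d, ∀ u : ℝ, u ∈ Set.Ioc (0:ℝ) 1 →
      CY (Function.update (fun _ => (1:ℝ)) i u) = u) := by
  constructor
  · -- max-stability
    intro t ht u hu
    rw [hCY, hCY]
    have key : ∀ j : Fin q,
        (-Real.log (C j (fun i =>
          Real.exp (-((-(β j i * Real.log ((u i) ^ t))) ^ (1/(α j))))))) ^ (α j)
        = t * (-Real.log (C j (fun i =>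
          Real.exp (-((-(β j i * Real.log (u i))) ^ (1/(α j))))))) ^ (α j) := by
      intro j
      obtain ⟨hαj, hαj1⟩ := hα j
      set v : Fin d → ℝ := fun i =>
        Real.exp (-((-(β j i * Real.log (u i))) ^ (1/(α j)))) with hv
      have hnn : ∀ i, 0 ≤ (-(β j i * Real.log (u i))) ^ (1/(α j)) := by
        intro i
        apply Real.rpow_nonneg
        have hlog := Real.log_nonpos (hu i).1.le (hu i).2
        nlinarith [hβ j i]
      have hvmem : ∀ i, v i ∈ Set.Ioc (0:ℝ) 1 := by
        intro i
        exact ⟨Real.exp_pos _, Real.exp_le_one_iff.mpr (neg_nonpos.mpr (hnn i))⟩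
      have hs : (0:ℝ) < t ^ (1/(α j)) := Real.rpow_pos_of_pos ht _
      have hvec : (fun i =>
          Real.exp (-((-(β j i * Real.log ((u i) ^ t))) ^ (1/(α j)))))
          = fun i => (v i) ^ (t ^ (1/(α j))) := by
        funext i
        rw [Real.log_rpow (hu i).1]
        have h1 : -(β j i * (t * Real.log (u i)))
            = t * (-(β j i * Real.log (u i))) := by ring
        rw [h1, mul_rpow_left_pos ht, hv]
        rw [← Real.exp_mul]
        ring_nf
      rw [hvec, hms j _ hs v hvmem, Real.log_rpow (hpos j v hvmem), neg_mul_eq_mul_neg,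
        mul_rpow_left_pos hs]
      have hst : (t ^ (1/(α j))) ^ (α j) = t := by
        rw [← Real.rpow_mul ht.le, one_div_mul_cancel hαj.ne', Real.rpow_one]
      rw [hst]
    simp only [key, ← Finset.mul_sum]
    rw [← Real.exp_mul]
    congr 1
    ring
  · -- uniform margins
    intro i u hu
    rw [hCY]
    have key : ∀ j : Fin q,
        (-Real.log (C j (fun k =>
          Real.exp (-((-(β j k * Real.log (Function.update (fun _ => (1:ℝ)) i u k)))
            ^ (1/(α j))))))) ^ (α j)
        = -(β j i * Real.log u) := by
      intro j
      obtain ⟨hαj, hαj1⟩ := hα j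
      have hnn : 0 ≤ -(β j i * Real.log u) := by
        have hlog := Real.log_nonpos hu.1.le hu.2
        nlinarith [hβ j i]
      have hnn' : 0 ≤ (-(β j i * Real.log u)) ^ (1/(α j)) := Real.rpow_nonneg hnn _
      have hvec : (fun k =>
          Real.exp (-((-(β j k * Real.log (Function.update (fun _ => (1:ℝ)) i u k)))
            ^ (1/(α j)))))
          = Function.update (fun _ => (1:ℝ)) i
              (Real.exp (-((-(β j i * Real.log u)) ^ (1/(α j))))) := by
        funext k
        by_cases hk : k = i
        · subst hk; simp
        · simp [Function.update_of_ne hk, Real.zero_rpow (inv_ne_zero hαj.ne')]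
      have hmem : Real.exp (-((-(β j i * Real.log u)) ^ (1/(α j)))) ∈ Set.Ioc (0:ℝ) 1 := by
        exact ⟨Real.exp_pos _, Real.exp_le_one_iff.mpr (neg_nonpos.mpr hnn')⟩
      rw [hvec, hmarg j i _ hmem, Real.log_exp, neg_neg,
        ← Real.rpow_mul hnn, one_div_mul_cancel hαj.ne', Real.rpow_one]
    simp only [key]
    have hsum : ∑ x : Fin q, -(β x i * Real.log u) = -Real.log u := by
      rw [Finset.sum_neg_distrib, ← Finset.sum_mul, hβsum i, one_mul]
    rw [hsum, neg_neg, Real.exp_log hu.1]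
end

section
/- Let C be a bivariate copula with C(u,u) > 0 for u ∈ (0,1), and suppose the limit L = lim_{u→1⁻} ln C(u,u) / ln u exists. Then lim_{u→1⁻} (1 - 2u + C(u,u))/(1 - u) exists and equals 2 - L. -/
open Real Filter

lemma slope_log_tendsto : Tendsto (fun x : ℝ => Real.log x / (x - 1))
    (nhdsWithin 1 {x | x ≠ 1}) (nhds 1) := by
  have h := hasDerivAt_iff_tendsto_slope.mp (Real.hasDerivAt_log (one_ne_zero))
  simp only [inv_one] at h
  refine h.congr fun x => ?_
  simp [slope, Real.log_one, div_eq_mul_inv, mul_comm]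

/-- for a bivariate copula `C`, if `ln C(u,u) / ln u → L` as
`u → 1⁻`, then the upper tail dependence coefficient
`lim (1 - 2u + C(u,u))/(1-u)` exists and equals `2 - L`. -/
theorem stmt3 (C : ℝ → ℝ → ℝ)
    (h2incr : ∀ u₁ u₂ v₁ v₂ : ℝ, u₁ ∈ Set.Icc (0:ℝ) 1 → u₂ ∈ Set.Icc (0:ℝ) 1 →
      v₁ ∈ Set.Icc (0:ℝ) 1 → v₂ ∈ Set.Icc (0:ℝ) 1 → u₁ ≤ u₂ → v₁ ≤ v₂ →
      0 ≤ C u₂ v₂ - C u₂ v₁ - C u₁ v₂ + C u₁ v₁)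
    (hground : ∀ u ∈ Set.Icc (0:ℝ) 1, C u 0 = 0 ∧ C 0 u = 0)
    (hmarg : ∀ u ∈ Set.Icc (0:ℝ) 1, C u 1 = u ∧ C 1 u = u)
    (hCpos : ∀ u ∈ Set.Ioo (0:ℝ) 1, 0 < C u u)
    (L : ℝ)
    (hL : Tendsto (fun u => Real.log (C u u) / Real.log u)
      (nhdsWithin 1 (Set.Iio 1)) (nhds L)) :
    Tendsto (fun u => (1 - 2*u + C u u) / (1 - u))
      (nhdsWithin 1 (Set.Iio 1)) (nhds (2 - L)) := by
  set l := nhdsWithin (1:ℝ) (Set.Iio 1) with hl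
  have hmem : Set.Ioo (0:ℝ) 1 ∈ l := Ioo_mem_nhdsLT_of_mem (by norm_num)
  -- upper bound C u u ≤ u
  have hub : ∀ u ∈ Set.Ioo (0:ℝ) 1, C u u ≤ u := by
    intro u hu
    have hIcc : u ∈ Set.Icc (0:ℝ) 1 := ⟨hu.1.le, hu.2.le⟩
    have h := h2incr 0 u u 1 (by norm_num) hIcc hIcc (by norm_num) hu.1.le hu.2.le
    have h0u := (hground u hIcc).2
    have h01 := (hground 1 (by norm_num)).2
    have := (hmarg u hIcc).1
    nlinarith
  have hlb : ∀ u ∈ Set.Ioo (0:ℝ) 1, 2*u - 1 ≤ C u u := by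
    intro u hu
    have hIcc : u ∈ Set.Icc (0:ℝ) 1 := ⟨hu.1.le, hu.2.le⟩
    have h := h2incr u 1 u 1 hIcc (by norm_num) hIcc (by norm_num) hu.2.le hu.2.le
    have h1 := (hmarg u hIcc).1
    have h2 := (hmarg u hIcc).2
    have h3 := (hmarg 1 (by norm_num)).1
    nlinarith
  -- g → 1
  have hg1 : Tendsto (fun u => C u u) l (nhds 1) := by
    have hlo : Tendsto (fun u : ℝ => 2*u - 1) l (nhds 1) := by
      have h : Tendsto (fun u : ℝ => 2*u - 1) (nhds 1) (nhds (2*1 - 1)) :=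
        ((continuous_const.mul continuous_id).sub continuous_const).tendsto 1
      have h2 : Tendsto (fun u : ℝ => 2*u - 1) l (nhds (2*1 - 1)) :=
        h.mono_left nhdsWithin_le_nhds
      norm_num at h2
      exact h2
    have hhi : Tendsto (fun u : ℝ => u) l (nhds 1) :=
      tendsto_id.mono_left nhdsWithin_le_nhds
    refine tendsto_of_tendsto_of_tendsto_of_le_of_le' hlo hhi ?_ ?_
    · filter_upwards [hmem] with u hu using hlb u hu
    · filter_upwards [hmem] with u hu using hub u hu
  -- g tends to 1 within ≠ 1
  have hgne : Tendsto (fun u => C u u) l (nhdsWithin 1 {x | x ≠ 1}) := by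
    rw [tendsto_nhdsWithin_iff]
    refine ⟨hg1, ?_⟩
    filter_upwards [hmem] with u hu
    exact ne_of_lt (lt_of_le_of_lt (hub u hu) hu.2)
  have hinv : Tendsto (fun x : ℝ => (x - 1) / Real.log x)
      (nhdsWithin 1 {x | x ≠ 1}) (nhds 1) := by
    have h := slope_log_tendsto.inv₀ one_ne_zero
    simp only [inv_one] at h
    refine h.congr fun x => ?_
    rw [inv_div]
  have hB : Tendsto (fun u => (C u u - 1) / Real.log (C u u)) l (nhds 1) :=
    hinv.comp hgne
  have hD : Tendsto (fun u : ℝ => Real.log u / (u - 1)) l (nhds 1) :=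
    slope_log_tendsto.mono_left (nhdsWithin_mono _ fun x hx => ne_of_lt hx)
  have hprod : Tendsto (fun u => 2 - (Real.log (C u u) / Real.log u) *
      ((C u u - 1) / Real.log (C u u)) * (Real.log u / (u - 1))) l
      (nhds (2 - L * 1 * 1)) :=
    tendsto_const_nhds.sub ((hL.mul hB).mul hD)
  have : (2 - L * 1 * 1) = 2 - L := by ring
  rw [this] at hprod
  refine hprod.congr' ?_
  filter_upwards [hmem] with u hu
  have hg0 : 0 < C u u := hCpos u hu
  have hg1' : C u u < 1 := lt_of_le_of_lt (hub u hu) hu.2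
  have hlogu : Real.log u ≠ 0 := ne_of_lt (Real.log_neg hu.1 hu.2)
  have hlogg : Real.log (C u u) ≠ 0 := ne_of_lt (Real.log_neg hg0 hg1')
  have hu1 : u - 1 ≠ 0 := by nlinarith [hu.2]
  have h1u : (1:ℝ) - u ≠ 0 := by nlinarith [hu.2]
  field_simp
  ring
end

section
/- Let C₁ be a max-stable bivariate copula with upper tail dependence coefficient λ₁ = 2 - (-ln C₁(e^{-1}, e^{-1})), and let α ∈ (0,1]. Define C(u,v) = exp(-(-ln C₁(exp(-(-ln u)^{1/α}), exp(-(-ln v)^{1/α})))^α). Then the upper tail dependence coefficient of C equals 2 - (2 - λ₁)^α. -/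
open Real Filter

lemma aux_mul_rpow {t θ a : ℝ} (ht : 0 < t) (ha : a ≠ 0) :
    (t * θ) ^ a = t ^ a * θ ^ a := by
  rcases lt_trichotomy θ 0 with h | h | h
  · rw [Real.rpow_def_of_neg (mul_neg_of_pos_of_neg ht h),
      Real.rpow_def_of_neg h, Real.rpow_def_of_pos ht,
      Real.log_mul ht.ne' h.ne, add_mul, Real.exp_add]
    ring
  · simp [h, Real.zero_rpow ha]
  · exact Real.mul_rpow ht.le h.le

/-- mixing a max-stable bivariate copula `C₁` with tail
dependence coefficient `λ₁` via an `α`-stable variable gives a copula with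
upper tail dependence coefficient `2 - (2 - λ₁)^α`. -/
theorem stmt5 (α : ℝ) (hα : α ∈ Set.Ioc (0:ℝ) 1)
    (C₁ : ℝ → ℝ → ℝ)
    (hpos : ∀ u v : ℝ, u ∈ Set.Ioc (0:ℝ) 1 → v ∈ Set.Ioc (0:ℝ) 1 → 0 < C₁ u v)
    (hms : ∀ t : ℝ, 0 < t → ∀ u v : ℝ, u ∈ Set.Ioc (0:ℝ) 1 →
      v ∈ Set.Ioc (0:ℝ) 1 → C₁ (u ^ t) (v ^ t) = (C₁ u v) ^ t)
    (lam₁ : ℝ)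
    (hlam₁ : lam₁ = 2 - (-Real.log (C₁ (Real.exp (-1)) (Real.exp (-1))))) :
    Tendsto (fun u : ℝ =>
      (1 - 2*u + Real.exp (-((-Real.log (C₁
          (Real.exp (-((-Real.log u) ^ (1/α))))
          (Real.exp (-((-Real.log u) ^ (1/α)))))) ^ α)))
        / (1 - u))
      (nhdsWithin 1 (Set.Iio 1)) (nhds (2 - (2 - lam₁) ^ α)) := by
  obtain ⟨hα0, hα1⟩ := hα
  have hemem : Real.exp (-1) ∈ Set.Ioc (0:ℝ) 1 :=
    ⟨Real.exp_pos _, by rw [Real.exp_le_one_iff]; norm_num⟩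
  set c := C₁ (Real.exp (-1)) (Real.exp (-1)) with hc
  have hcpos : 0 < c := hpos _ _ hemem hemem
  set θ := -Real.log c with hθ
  set β := θ ^ α with hβ
  -- pointwise identification of the inner expression
  have key : ∀ u : ℝ, u ∈ Set.Ioo (0:ℝ) 1 →
      Real.exp (-((-Real.log (C₁
          (Real.exp (-((-Real.log u) ^ (1/α))))
          (Real.exp (-((-Real.log u) ^ (1/α)))))) ^ α)) = u ^ β := by
    intro u hu
    obtain ⟨hu0, hu1⟩ := hu
    set s := -Real.log u with hs
    have hspos : 0 < s := by
      rw [hs]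
      have := Real.log_neg hu0 hu1
      linarith
    set t := s ^ (1/α) with hts
    have htpos : 0 < t := Real.rpow_pos_of_pos hspos _
    have h1 : Real.exp (-t) = (Real.exp (-1)) ^ t := by
      rw [Real.rpow_def_of_pos (Real.exp_pos _), Real.log_exp]
      ring_nf
    have h2 : C₁ (Real.exp (-t)) (Real.exp (-t)) = c ^ t := by
      rw [h1]; exact hms t htpos _ _ hemem hemem
    rw [h2, Real.log_rpow hcpos]
    have h3 : -(t * Real.log c) = t * θ := by rw [hθ]; ring
    rw [h3, aux_mul_rpow htpos hα0.ne']
    have h4 : t ^ α = s := by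
      rw [hts, ← Real.rpow_mul hspos.le, one_div_mul_cancel hα0.ne', Real.rpow_one]
    rw [h4, Real.rpow_def_of_pos hu0]
    congr 1
    rw [hs]; ring
  -- the derivative of x ↦ x^β at 1 is β
  have hderiv : HasDerivAt (fun x : ℝ => x ^ β) β 1 := by
    have := Real.hasDerivAt_rpow_const (x := (1:ℝ)) (p := β) (Or.inl one_ne_zero)
    simpa using this
  have hslope := hasDerivAt_iff_tendsto_slope.mp hderiv
  have h2 : Tendsto (fun u : ℝ => 2 - slope (fun x : ℝ => x ^ β) 1 u)
      (nhdsWithin 1 (Set.Iio 1)) (nhds (2 - β)) := by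
    refine Tendsto.sub tendsto_const_nhds ?_
    exact hslope.mono_left (nhdsWithin_mono _ (fun x hx => ne_of_lt hx))
  have heq : (fun u : ℝ =>
      (1 - 2*u + Real.exp (-((-Real.log (C₁
          (Real.exp (-((-Real.log u) ^ (1/α))))
          (Real.exp (-((-Real.log u) ^ (1/α)))))) ^ α)))
        / (1 - u))
      =ᶠ[nhdsWithin 1 (Set.Iio 1)] (fun u : ℝ => 2 - slope (fun x : ℝ => x ^ β) 1 u) := by
    filter_upwards [Ioo_mem_nhdsLT_of_mem (show (1:ℝ) ∈ Set.Ioc (0:ℝ) 1 by norm_num)]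
      with u hu
    rw [key u hu, slope_def_field]
    have h1u : (1:ℝ) - u ≠ 0 := sub_ne_zero.mpr (ne_of_lt hu.2).symm
    have hu1' : u - 1 ≠ 0 := sub_ne_zero.mpr (ne_of_lt hu.2)
    rw [Real.one_rpow]
    field_simp
    ring
  have hfin : 2 - (2 - lam₁) ^ α = 2 - β := by
    rw [hlam₁, hβ, hθ]; ring_nf
  rw [hfin]
  exact Tendsto.congr' heq.symm h2
end

section
/- Let C(u₁,...,u_d) = exp(-∑_{j=1}^q (∑_{i=1}^d (-β_{ji} ln u_i)^{1/α_j})^{α_j}) with α_j ∈ (0,1], β_{ji} ≥ 0, ∑_j β_{ji} = 1 for each i. Then for any s ≠ t in {1,...,d}, the bivariate margin C_{s,t}(u,v) = C evaluated with u_s = u, u_t = v, and all other arguments 1 satisfies lim_{u→1⁻} (1 - 2u + C_{s,t}(u,u))/(1-u) = 2 - ∑_{j=1}^q (β_{js}^{1/α_j} + β_{jt}^{1/α_j})^{α_j}. -/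
open Real Filter Topology

/-!
On the pair margin only the coordinates `s` and `t` contribute, both equal to `u`, so each
logistic block is homogeneous of degree one in `-log u` and the diagonal of the margin is
`u ↦ u ^ K` with `K = ∑ⱼ (β_{js}^{1/αⱼ} + β_{jt}^{1/αⱼ})^{αⱼ}`. The tail coefficient of a
diagonal `f` with `f 1 = 1` is `2 - f'(1⁻)`, here `2 - K`.
-/

noncomputable def asymLogisticCopula {ι κ : Type*} [Fintype ι] [Fintype κ]
    (α : κ → ℝ) (β : κ → ι → ℝ) (u : ι → ℝ) : ℝ :=
  exp (-(∑ j, (∑ i, (-(β j i * log (u i))) ^ (1 / α j)) ^ α j))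

def pairMargin {ι : Type*} [DecidableEq ι] (s t : ι) (u : ℝ) : ι → ℝ :=
  fun i => if i = s then u else if i = t then u else 1

theorem tendsto_one_sub_two_mul_add_div_one_sub {f : ℝ → ℝ} {f' : ℝ}
    (hf : HasDerivWithinAt f f' (Set.Iio 1) 1) (hf1 : f 1 = 1) :
    Tendsto (fun u => (1 - 2 * u + f u) / (1 - u)) (𝓝[<] 1) (𝓝 (2 - f')) := by
  have hslope : Tendsto (slope f 1) (𝓝[<] 1) (𝓝 f') :=
    (hasDerivWithinAt_iff_tendsto_slope' (by simp)).mp hf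
  refine (tendsto_const_nhds.sub hslope).congr' ?_
  filter_upwards [self_mem_nhdsWithin] with u (hu : u < 1)
  have hne : 1 - u ≠ 0 := sub_ne_zero.mpr hu.ne'
  rw [slope_def_field, hf1, ← neg_div_neg_eq, neg_sub, neg_sub]
  field_simp
  ring

theorem add_rpow_one_div_rpow_homogeneous {a b α x : ℝ} (ha : 0 ≤ a) (hb : 0 ≤ b) (hα : 0 < α)
    (hx : 0 ≤ x) :
    ((a * x) ^ (1 / α) + (b * x) ^ (1 / α)) ^ α = (a ^ (1 / α) + b ^ (1 / α)) ^ α * x := by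
  have hA : 0 ≤ a ^ (1 / α) + b ^ (1 / α) := by positivity
  rw [mul_rpow ha hx, mul_rpow hb hx, ← add_mul, mul_rpow hA (by positivity),
    ← rpow_mul hx, one_div_mul_cancel hα.ne', rpow_one]

theorem sum_neg_mul_log_pairMargin {ι : Type*} [Fintype ι] [DecidableEq ι] {s t : ι}
    (hst : s ≠ t) (w : ι → ℝ) {p : ℝ} (hp : p ≠ 0) (u : ℝ) :
    ∑ i, (-(w i * log (pairMargin s t u i))) ^ p
      = (w s * -log u) ^ p + (w t * -log u) ^ p := by
  rw [Fintype.sum_eq_add s t hst]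
  · simp [pairMargin, hst.symm]
  · rintro i ⟨his, hit⟩
    simp [pairMargin, his, hit, zero_rpow hp]

theorem asymLogisticCopula_pairMargin {ι κ : Type*} [Fintype ι] [Fintype κ] [DecidableEq ι]
    {α : κ → ℝ} {β : κ → ι → ℝ} (hα : ∀ j, 0 < α j) (hβ : ∀ j i, 0 ≤ β j i)
    {s t : ι} (hst : s ≠ t) {u : ℝ} (hu₀ : 0 < u) (hu₁ : u ≤ 1) :
    asymLogisticCopula α β (pairMargin s t u)
      = u ^ ∑ j, (β j s ^ (1 / α j) + β j t ^ (1 / α j)) ^ α j := by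
  have hlog : 0 ≤ -log u := neg_nonneg.mpr (log_nonpos hu₀.le hu₁)
  have hblock : ∀ j, (∑ i, (-(β j i * log (pairMargin s t u i))) ^ (1 / α j)) ^ α j
      = (β j s ^ (1 / α j) + β j t ^ (1 / α j)) ^ α j * -log u := fun j => by
    rw [sum_neg_mul_log_pairMargin hst _ (one_div_ne_zero (hα j).ne'),
      add_rpow_one_div_rpow_homogeneous (hβ j s) (hβ j t) (hα j) hlog]
  rw [asymLogisticCopula, Finset.sum_congr rfl fun j _ => hblock j, ← Finset.sum_mul,
    rpow_def_of_pos hu₀]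
  ring_nf

theorem stmt6_general (d q : ℕ) (α : Fin q → ℝ) (hα : ∀ j, α j ∈ Set.Ioc (0:ℝ) 1)
    (β : Fin q → Fin d → ℝ) (hβ : ∀ j i, 0 ≤ β j i)
    (C : (Fin d → ℝ) → ℝ)
    (hC : ∀ u : Fin d → ℝ, C u =
      Real.exp (-(∑ j, (∑ i, (-(β j i * Real.log (u i))) ^ (1/(α j))) ^ (α j))))
    (s t : Fin d) (hst : s ≠ t) :
    Tendsto (fun u : ℝ =>
      (1 - 2*u + C (fun i => if i = s then u else if i = t then u else 1))
        / (1 - u))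
      (nhdsWithin 1 (Set.Iio 1))
      (nhds (2 - ∑ j, ((β j s) ^ (1/(α j)) + (β j t) ^ (1/(α j))) ^ (α j))) := by
  set K := ∑ j, ((β j s) ^ (1/(α j)) + (β j t) ^ (1/(α j))) ^ (α j)
  have hdiag : HasDerivWithinAt (fun u : ℝ => u ^ K) K (Set.Iio 1) 1 := by
    simpa using (hasDerivAt_rpow_const (p := K) (Or.inl one_ne_zero)).hasDerivWithinAt
  refine (tendsto_one_sub_two_mul_add_div_one_sub hdiag (one_rpow K)).congr' ?_
  have hpos : Set.Ioi (0:ℝ) ∈ 𝓝[<] (1:ℝ) := nhdsWithin_le_nhds (Ioi_mem_nhds one_pos)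
  filter_upwards [hpos, self_mem_nhdsWithin] with u (hu₀ : 0 < u) (hu₁ : u < 1)
  rw [hC, ← asymLogisticCopula_pairMargin (fun j => (hα j).1) hβ hst hu₀ hu₁.le]
  rfl

/-- bivariate upper tail dependence coefficients of the
asymmetric logistic copula. -/
theorem stmt6 (d q : ℕ) (α : Fin q → ℝ) (hα : ∀ j, α j ∈ Set.Ioc (0:ℝ) 1)
    (β : Fin q → Fin d → ℝ) (hβ : ∀ j i, 0 ≤ β j i)
    (hβsum : ∀ i, ∑ j, β j i = 1)
    (C : (Fin d → ℝ) → ℝ)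
    (hC : ∀ u : Fin d → ℝ, C u =
      Real.exp (-(∑ j, (∑ i, (-(β j i * Real.log (u i))) ^ (1/(α j))) ^ (α j))))
    (s t : Fin d) (hst : s ≠ t) :
    Tendsto (fun u : ℝ =>
      (1 - 2*u + C (fun i => if i = s then u else if i = t then u else 1))
        / (1 - u))
      (nhdsWithin 1 (Set.Iio 1))
      (nhds (2 - ∑ j, ((β j s) ^ (1/(α j)) + (β j t) ^ (1/(α j))) ^ (α j))) :=
  stmt6_general d q α hα β hβ C hC s t hst
end

section
/- For the asymmetric logistic copula C(u₁,...,u_d) = exp(-∑_{j=1}^q (∑_{i=1}^d (-β_{ji} ln u_i)^{1/α_j})^{α_j}) with α_j ∈ (0,1], β_{ji} ≥ 0, ∑_j β_{ji} = 1 for each i, and for ∅ ≠ J ⊆ D = {1,...,d} such that the denominator below is nonzero, the orthant tail dependence coefficient λ_J = lim_{u→1⁻} [∑_{∅≠A⊆D} (-1)^{|A|-1} ln C_A(u,...,u)]/[∑_{∅≠A⊆J} (-1)^{|A|-1} ln C_A(u,...,u)] equals [∑_{j=1}^q ∑_{∅≠A⊆D} (-1)^{|A|-1} (∑_{i∈A}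 β_{ji}^{1/α_j})^{α_j}] / [∑_{j=1}^q ∑_{∅≠A⊆J} (-1)^{|A|-1} (∑_{i∈A} β_{ji}^{1/α_j})^{α_j}]. -/
open Real Filter

/-- orthant tail dependence coefficients of the asymmetric
logistic copula. -/
theorem stmt8 (d q : ℕ) (α : Fin q → ℝ) (hα : ∀ j, α j ∈ Set.Ioc (0:ℝ) 1)
    (β : Fin q → Fin d → ℝ) (hβ : ∀ j i, 0 ≤ β j i)
    (hβsum : ∀ i, ∑ j, β j i = 1)
    (C : (Fin d → ℝ) → ℝ)
    (hC : ∀ u : Fin d → ℝ, C u =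
      Real.exp (-(∑ j, (∑ i, (-(β j i * Real.log (u i))) ^ (1/(α j))) ^ (α j))))
    (J : Finset (Fin d)) (hJ : J.Nonempty)
    (hden : (∑ j, ∑ A ∈ J.powerset.filter (fun A => A ≠ ∅),
      (-1:ℝ) ^ (A.card - 1) * (∑ i ∈ A, (β j i) ^ (1/(α j))) ^ (α j)) ≠ 0) :
    Tendsto (fun u : ℝ =>
      (∑ A ∈ (Finset.univ : Finset (Fin d)).powerset.filter (fun A => A ≠ ∅),
        (-1:ℝ) ^ (A.card - 1) *
          Real.log (C (fun i => if i ∈ A then u else 1))) /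
      (∑ A ∈ J.powerset.filter (fun A => A ≠ ∅),
        (-1:ℝ) ^ (A.card - 1) *
          Real.log (C (fun i => if i ∈ A then u else 1))))
      (nhdsWithin 1 (Set.Iio 1))
      (nhds ((∑ j, ∑ A ∈ (Finset.univ : Finset (Fin d)).powerset.filter (fun A => A ≠ ∅),
          (-1:ℝ) ^ (A.card - 1) * (∑ i ∈ A, (β j i) ^ (1/(α j))) ^ (α j)) /
        (∑ j, ∑ A ∈ J.powerset.filter (fun A => A ≠ ∅),
          (-1:ℝ) ^ (A.card - 1) * (∑ i ∈ A, (β j i) ^ (1/(α j))) ^ (α j)))) := by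
  -- abbreviation for the per-set constant
  set s : Fin q → Finset (Fin d) → ℝ :=
    fun j A => (∑ i ∈ A, (β j i) ^ (1/(α j))) ^ (α j) with hs
  -- key computation of log C on indicator-type points
  have key : ∀ (A : Finset (Fin d)) (u : ℝ), u ∈ Set.Ioo (0:ℝ) 1 →
      Real.log (C (fun i => if i ∈ A then u else 1)) =
      Real.log u * ∑ j, s j A := by
    intro A u hu
    rw [hC, Real.log_exp]
    have hlu : 0 ≤ -Real.log u := by
      have := Real.log_nonpos hu.1.le hu.2.le
      linarith
    have hj : ∀ j : Fin q,
        (∑ i, (-(β j i * Real.log (if i ∈ A then u else 1))) ^ (1/(α j))) ^ (α j)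
        = (-Real.log u) * s j A := by
      intro j
      have hα0 : α j ≠ 0 := ne_of_gt (hα j).1
      have hsum : (∑ i, (-(β j i * Real.log (if i ∈ A then u else 1))) ^ (1/(α j)))
          = (-Real.log u) ^ (1/(α j)) * ∑ i ∈ A, (β j i) ^ (1/(α j)) := by
        rw [Finset.mul_sum, ← Finset.sum_subset (Finset.subset_univ A)]
        · refine Finset.sum_congr rfl fun i hi => ?_
          rw [if_pos hi]
          have h1 : -(β j i * Real.log u) = (β j i) * (-Real.log u) := by ring
          rw [h1, Real.mul_rpow (hβ j i) hlu, mul_comm]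
        · intro i _ hi
          rw [if_neg hi, Real.log_one, mul_zero, neg_zero,
            Real.zero_rpow (one_div_ne_zero hα0)]
      rw [hsum, Real.mul_rpow (Real.rpow_nonneg hlu _)
          (Finset.sum_nonneg fun i _ => Real.rpow_nonneg (hβ j i) _),
        ← Real.rpow_mul hlu, one_div_mul_cancel hα0, Real.rpow_one, hs]
    rw [Finset.sum_congr rfl fun j _ => hj j, ← Finset.mul_sum]
    ring
  -- swap sums
  have hswap : ∀ (K : Finset (Fin d)),
      (∑ j, ∑ A ∈ K.powerset.filter (fun A => A ≠ ∅),
        (-1:ℝ) ^ (A.card - 1) * s j A)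
      = ∑ A ∈ K.powerset.filter (fun A => A ≠ ∅),
        (-1:ℝ) ^ (A.card - 1) * ∑ j, s j A := by
    intro K
    rw [Finset.sum_comm]
    exact Finset.sum_congr rfl fun A _ => (Finset.mul_sum _ _ _).symm
  set NA := ∑ A ∈ (Finset.univ : Finset (Fin d)).powerset.filter (fun A => A ≠ ∅),
      (-1:ℝ) ^ (A.card - 1) * ∑ j, s j A with hNA
  set NJ := ∑ A ∈ J.powerset.filter (fun A => A ≠ ∅),
      (-1:ℝ) ^ (A.card - 1) * ∑ j, s j A with hNJ
  rw [hswap Finset.univ, hswap J]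
  refine Tendsto.congr' ?_ tendsto_const_nhds
  have hmem : Set.Ioo (0:ℝ) 1 ∈ nhdsWithin (1:ℝ) (Set.Iio 1) :=
    Ioo_mem_nhdsLT_of_mem (by norm_num : (1:ℝ) ∈ Set.Ioc (0:ℝ) 1)
  filter_upwards [hmem] with u hu
  have hlog : Real.log u ≠ 0 := ne_of_lt (Real.log_neg hu.1 hu.2)
  have hnum : (∑ A ∈ (Finset.univ : Finset (Fin d)).powerset.filter (fun A => A ≠ ∅),
      (-1:ℝ) ^ (A.card - 1) * Real.log (C (fun i => if i ∈ A then u else 1)))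
      = Real.log u * NA := by
    rw [hNA, Finset.mul_sum]
    refine Finset.sum_congr rfl fun A _ => ?_
    rw [key A u hu]; ring
  have hden' : (∑ A ∈ J.powerset.filter (fun A => A ≠ ∅),
      (-1:ℝ) ^ (A.card - 1) * Real.log (C (fun i => if i ∈ A then u else 1)))
      = Real.log u * NJ := by
    rw [hNJ, Finset.mul_sum]
    refine Finset.sum_congr rfl fun A _ => ?_
    rw [key A u hu]; ring
  rw [hnum, hden', mul_div_mul_left _ _ hlog]
end

section
/- Let a_{lki} ≥ 0 (l ≥ 1, k ∈ ℤ, 1 ≤ i ≤ d) with ∑_{l,k} a_{lki} = 1 for each i, and define the M4 copula C(u₁,...,u_d) = ∏_{l,k} min_{1≤i≤d} u_i^{a_{lki}}. Then C is max-stable and for s ≠ t its bivariate upper tail dependence coefficient equals 2 - ∑_{l,k} max(a_{lks}, a_{lkt}). -/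
open Real Filter

lemma sup_two_of_indicator {d : ℕ} (s t : Fin d) (hst : s ≠ t)
    (A B c : ℝ) (hA : 0 ≤ A) (hB : 0 ≤ B) (hc : 0 ≤ c) :
    (⨆ i : Fin d, (if i = s then A * c else if i = t then B * c else 0)) = max A B * c := by
  haveI : Nonempty (Fin d) := ⟨s⟩
  have hbdd : BddAbove (Set.range fun i : Fin d =>
      (if i = s then A * c else if i = t then B * c else 0)) :=
    Set.Finite.bddAbove (Set.finite_range _)
  apply le_antisymm
  · apply ciSup_le
    intro i
    by_cases h1 : i = s
    · simp [h1, mul_le_mul_of_nonneg_right (le_max_left A B) hc]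
    · by_cases h2 : i = t
      · simp [h1, h2, hst.symm, mul_le_mul_of_nonneg_right (le_max_right A B) hc]
      · simp [h1, h2]
        positivity
  · rw [max_mul_of_nonneg _ _ hc]
    apply max_le
    · have := le_ciSup hbdd s
      simpa using this
    · have := le_ciSup hbdd t
      simpa [hst.symm] using this

/-- the M4 copula is max-stable and its `(s,t)` bivariate
margin has upper tail dependence coefficient `2 - ∑_{l,k} max(a_{lks}, a_{lkt})`. -/
theorem stmt11 (d : ℕ) (a : ℕ → ℤ → Fin d → ℝ)
    (ha : ∀ l k i, 0 ≤ a l k i)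
    (hasum : ∀ i, HasSum (fun p : ℕ × ℤ => a p.1 p.2 i) 1)
    (C : (Fin d → ℝ) → ℝ)
    (hC : ∀ u : Fin d → ℝ, C u =
      Real.exp (-(∑' p : ℕ × ℤ, ⨆ i : Fin d, (-(a p.1 p.2 i * Real.log (u i))))))
    (s t : Fin d) (hst : s ≠ t) :
    (∀ r : ℝ, 0 < r → ∀ u : Fin d → ℝ, (∀ i, u i ∈ Set.Ioc (0:ℝ) 1) →
      C (fun i => u i ^ r) = (C u) ^ r) ∧
    Tendsto (fun u : ℝ =>
        (1 - 2*u + C (fun i => if i = s then u else if i = t then u else 1))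
          / (1 - u))
      (nhdsWithin 1 (Set.Iio 1))
      (nhds (2 - ∑' p : ℕ × ℤ, max (a p.1 p.2 s) (a p.1 p.2 t))) := by
  haveI : Nonempty (Fin d) := ⟨s⟩
  set M : ℝ := ∑' p : ℕ × ℤ, max (a p.1 p.2 s) (a p.1 p.2 t) with hM
  constructor
  · -- max-stability
    intro r hr u hu
    rw [hC, hC]
    have key : (∑' p : ℕ × ℤ, ⨆ i : Fin d, (-(a p.1 p.2 i * Real.log (u i ^ r))))
        = r * ∑' p : ℕ × ℤ, ⨆ i : Fin d, (-(a p.1 p.2 i * Real.log (u i))) := by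
      rw [← tsum_mul_left]
      congr 1
      funext p
      rw [Real.mul_iSup_of_nonneg hr.le]
      congr 1
      funext i
      rw [Real.log_rpow (hu i).1 r]
      ring
    rw [key, ← Real.exp_mul]
    ring_nf
  · -- tail dependence
    -- value of C on the diagonal-type points, for u ∈ (0,1]
    have hCval : ∀ u : ℝ, 0 < u → u ≤ 1 →
        C (fun i => if i = s then u else if i = t then u else 1)
          = Real.exp (M * Real.log u) := by
      intro u hu hu1
      rw [hC]
      have hlogu : 0 ≤ -Real.log u := by
        simp only [neg_nonneg]
        exact Real.log_nonpos hu.le hu1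
      have keyeq : (∑' p : ℕ × ℤ, ⨆ i : Fin d, (-(a p.1 p.2 i *
          Real.log (if i = s then u else if i = t then u else 1))))
          = M * (-Real.log u) := by
        rw [hM, ← tsum_mul_right]
        congr 1
        funext p
        rw [← sup_two_of_indicator s t hst _ _ _ (ha _ _ s) (ha _ _ t) hlogu]
        congr 1
        funext i
        by_cases h1 : i = s
        · subst h1; simp [hst, mul_comm]
        · by_cases h2 : i = t
          · subst h2; simp [h1, mul_comm]
          · simp [h1, h2]
      rw [keyeq]; ring_nf
    -- derivative computation
    set f : ℝ → ℝ := fun u => 1 - 2*u + Real.exp (M * Real.log u) with hf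
    have hf1 : f 1 = 0 := by norm_num [hf]
    have hderiv : HasDerivAt f (-2 + M) 1 := by
      have h1 : HasDerivAt (fun u : ℝ => 1 - 2*u) (-2) 1 := by
        simpa using ((hasDerivAt_id (1:ℝ)).const_mul 2).const_sub 1
      have h2 : HasDerivAt (fun u : ℝ => Real.exp (M * Real.log u)) M 1 := by
        have hl : HasDerivAt (fun u : ℝ => M * Real.log u) (M * 1⁻¹) 1 :=
          (Real.hasDerivAt_log one_ne_zero).const_mul M
        have := hl.exp
        simpa using this
      exact h1.add h2
    have hslope : Tendsto (slope f 1) (nhdsWithin 1 {(1:ℝ)}ᶜ) (nhds (-2 + M)) :=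
      hasDerivAt_iff_tendsto_slope.mp hderiv
    have hslope' : Tendsto (fun u => -(slope f 1 u)) (nhdsWithin 1 (Set.Iio 1))
        (nhds (2 - M)) := by
      have := (hslope.neg).mono_left
        (nhdsWithin_mono 1 (fun x hx => ne_of_lt hx : Set.Iio 1 ⊆ {(1:ℝ)}ᶜ))
      convert this using 2
      ring
    refine hslope'.congr' ?_
    have hev : ∀ᶠ u : ℝ in nhdsWithin 1 (Set.Iio 1), 0 < u ∧ u < 1 := by
      filter_upwards [self_mem_nhdsWithin,
        eventually_nhdsWithin_of_eventually_nhds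
          (eventually_gt_nhds (by norm_num : (0:ℝ) < 1))] with u h1 h2
      exact ⟨h2, h1⟩
    filter_upwards [hev] with u hu
    obtain ⟨hu0, hu1⟩ := hu
    have hne : u - 1 ≠ 0 := sub_ne_zero.mpr (ne_of_lt hu1)
    have hne' : (1:ℝ) - u ≠ 0 := sub_ne_zero.mpr (ne_of_gt hu1)
    rw [slope_def_field, hf1, hCval u hu0 hu1.le]
    simp only [hf]
    field_simp
    ring
end

section
/- Let C be a max-stable d-dimensional copula, ∅ ≠ J ⊆ D = {1,...,d}, and let s ∈ J. Denote by ℓ_A = -ln C_A(e^{-1},...,e^{-1}) the exponent measure coefficients of the margins. If λ^{(C_J)} := ∑_{∅≠A⊆J} (-1)^{|A|-1} ℓ_A ≠ 0, then the orthant tail dependence coefficient λ_J = [∑_{∅≠A⊆D} (-1)^{|A|-1} ℓ_A] / [∑_{∅≠A⊆J} (-1)^{|A|-1} ℓ_A] satisfies λ_J = λ^{(C_D)} / λ^{(C_J)}, where λ^{(C_D)} = ∑_{∅≠A⊆D} (-1)^{|A|-1} ℓ_A; i.e., λ_J equals the ratio of the full inclusion–exclusion sum over D to that over J. -/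
open Real Filter

/-!
Max-stability `C (u ^ t) = C u ^ t` makes `log C` homogeneous of degree one along powers. Since
`u = (e⁻¹) ^ (-log u)`, the margin `C_A` at `(u, …, u)` therefore satisfies
`log C_A (u, …, u) = ℓ_A · log u` for every `u ∈ (0, 1)`. Both inclusion–exclusion sums in the
limit defining `λ_J` thus carry the common factor `log u ≠ 0`, the ratio is constant on `(0, 1)`,
and its limit is that constant.
-/

section MaxStable

variable {ι : Type*} {C : (ι → ℝ) → ℝ}

theorem log_apply_rpow_of_maxStable
    (hpos : ∀ u : ι → ℝ, (∀ i, u i ∈ Set.Ioc (0:ℝ) 1) → 0 < C u)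
    (hms : ∀ t : ℝ, 0 < t → ∀ u : ι → ℝ, (∀ i, u i ∈ Set.Ioc (0:ℝ) 1) →
      C (fun i => u i ^ t) = (C u) ^ t)
    {v : ι → ℝ} (hv : ∀ i, v i ∈ Set.Ioc (0:ℝ) 1) {t : ℝ} (ht : 0 < t) :
    log (C fun i => v i ^ t) = t * log (C v) := by
  rw [hms t ht v hv, log_rpow (hpos v hv)]

theorem log_apply_ite_of_maxStable [DecidableEq ι]
    (hpos : ∀ u : ι → ℝ, (∀ i, u i ∈ Set.Ioc (0:ℝ) 1) → 0 < C u)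
    (hms : ∀ t : ℝ, 0 < t → ∀ u : ι → ℝ, (∀ i, u i ∈ Set.Ioc (0:ℝ) 1) →
      C (fun i => u i ^ t) = (C u) ^ t)
    (A : Finset ι) {u : ℝ} (hu : u ∈ Set.Ioo (0:ℝ) 1) :
    log (C fun i => if i ∈ A then u else 1) =
      log u * -log (C fun i => if i ∈ A then exp (-1) else 1) := by
  have hexp : exp (-1) ^ (-log u) = u := by
    rw [← exp_mul, neg_one_mul, neg_neg, exp_log hu.1]
  have hv : ∀ i, (if i ∈ A then exp (-1) else 1) ∈ Set.Ioc (0:ℝ) 1 := fun i => by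
    split_ifs
    · exact ⟨exp_pos _, exp_le_one_iff.mpr (by norm_num)⟩
    · exact ⟨one_pos, le_rfl⟩
  have hpow : (fun i => if i ∈ A then u else 1) =
      fun i => (if i ∈ A then exp (-1) else 1) ^ (-log u) := by
    funext i
    split_ifs <;> simp [hexp]
  rw [hpow, log_apply_rpow_of_maxStable hpos hms hv (neg_pos.mpr (log_neg hu.1 hu.2))]
  ring

end MaxStable

theorem div_sum_mul_left_eq {α : Type*} (s t : Finset α) (w f : α → ℝ) {c : ℝ} (hc : c ≠ 0) :
    (∑ A ∈ s, w A * (c * f A)) / (∑ A ∈ t, w A * (c * f A)) =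
      (∑ A ∈ s, w A * f A) / (∑ A ∈ t, w A * f A) := by
  simp_rw [mul_left_comm _ c, ← Finset.mul_sum]
  exact mul_div_mul_left _ _ hc

theorem stmt15_general (d : ℕ) (C : (Fin d → ℝ) → ℝ)
    (hpos : ∀ u : Fin d → ℝ, (∀ i, u i ∈ Set.Ioc (0:ℝ) 1) → 0 < C u)
    (hms : ∀ t : ℝ, 0 < t → ∀ u : Fin d → ℝ, (∀ i, u i ∈ Set.Ioc (0:ℝ) 1) →
      C (fun i => u i ^ t) = (C u) ^ t)
    (ℓ : Finset (Fin d) → ℝ)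
    (hℓ : ∀ A, ℓ A = -Real.log (C (fun i => if i ∈ A then Real.exp (-1) else 1)))
    (J : Finset (Fin d))
    (lamJ : ℝ)
    (hlamJ : Tendsto (fun u : ℝ =>
      (∑ A ∈ (Finset.univ : Finset (Fin d)).powerset.filter (fun A => A ≠ ∅),
        (-1:ℝ) ^ (A.card - 1) *
          Real.log (C (fun i => if i ∈ A then u else 1))) /
      (∑ A ∈ J.powerset.filter (fun A => A ≠ ∅),
        (-1:ℝ) ^ (A.card - 1) *
          Real.log (C (fun i => if i ∈ A then u else 1))))
      (nhdsWithin 1 (Set.Iio 1)) (nhds lamJ)) :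
    lamJ = (∑ A ∈ (Finset.univ : Finset (Fin d)).powerset.filter (fun A => A ≠ ∅),
        (-1:ℝ) ^ (A.card - 1) * ℓ A) /
      (∑ A ∈ J.powerset.filter (fun A => A ≠ ∅),
        (-1:ℝ) ^ (A.card - 1) * ℓ A) := by
  have hlog : ∀ u ∈ Set.Ioo (0:ℝ) 1, ∀ A : Finset (Fin d),
      log (C fun i => if i ∈ A then u else 1) = log u * ℓ A := fun u hu A => by
    rw [hℓ, log_apply_ite_of_maxStable hpos hms A hu]
  refine tendsto_nhds_unique hlamJ (tendsto_const_nhds.congr' ?_)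
  filter_upwards [Ioo_mem_nhdsLT zero_lt_one] with u hu
  simp_rw [hlog u hu]
  exact (div_sum_mul_left_eq _ _ _ _ (log_neg hu.1 hu.2).ne).symm

/-- for a max-stable copula the orthant tail dependence
coefficient `λ_J` equals the ratio `λ^{(C_D)} / λ^{(C_J)}` of
inclusion–exclusion sums of the extremal coefficients. -/
theorem stmt15 (d : ℕ) (C : (Fin d → ℝ) → ℝ)
    (hpos : ∀ u : Fin d → ℝ, (∀ i, u i ∈ Set.Ioc (0:ℝ) 1) → 0 < C u)
    (hms : ∀ t : ℝ, 0 < t → ∀ u : Fin d → ℝ, (∀ i, u i ∈ Set.Ioc (0:ℝ) 1) →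
      C (fun i => u i ^ t) = (C u) ^ t)
    (ℓ : Finset (Fin d) → ℝ)
    (hℓ : ∀ A, ℓ A = -Real.log (C (fun i => if i ∈ A then Real.exp (-1) else 1)))
    (J : Finset (Fin d)) (hJ : J.Nonempty) (s : Fin d) (hs : s ∈ J)
    (hden : (∑ A ∈ J.powerset.filter (fun A => A ≠ ∅),
      (-1:ℝ) ^ (A.card - 1) * ℓ A) ≠ 0)
    (lamJ : ℝ)
    (hlamJ : Tendsto (fun u : ℝ =>
      (∑ A ∈ (Finset.univ : Finset (Fin d)).powerset.filter (fun A => A ≠ ∅),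
        (-1:ℝ) ^ (A.card - 1) *
          Real.log (C (fun i => if i ∈ A then u else 1))) /
      (∑ A ∈ J.powerset.filter (fun A => A ≠ ∅),
        (-1:ℝ) ^ (A.card - 1) *
          Real.log (C (fun i => if i ∈ A then u else 1))))
      (nhdsWithin 1 (Set.Iio 1)) (nhds lamJ)) :
    lamJ = (∑ A ∈ (Finset.univ : Finset (Fin d)).powerset.filter (fun A => A ≠ ∅),
        (-1:ℝ) ^ (A.card - 1) * ℓ A) /
      (∑ A ∈ J.powerset.filter (fun A => A ≠ ∅),
        (-1:ℝ) ^ (A.card - 1) * ℓ A) :=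
  stmt15_general d C hpos hms ℓ hℓ J lamJ hlamJ
end
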